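/- If the pair ([C̄', (L⊗H)']', I_N ⊗ A) is detectable and 1_N ∈ Ker L, then rank O_H ≥ max_i dim C_i^u, where O_H is the observability matrix of (H,A). -/

import Mathlib

open Matrix Kronecker Polynomial

/-! If `x ∈ C_iᵘ` also lies in `Ker O_H`, then by Cayley–Hamilton `C_i A^l x = 0` and `H A^l x = 0`
for every `l`. The vector `e_i ⊗ x` is therefore killed by `C̄ (I ⊗ A)^l`, by
`(L ⊗ H)(I ⊗ A)^l = L ⊗ H A^l` and by `α⁺(I ⊗ A) = I ⊗ α⁺(A)`, so detectability forces `x = 0`.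
Thus `C_iᵘ ∩ Ker O_H = 0`, and `O_H` maps `C_iᵘ` injectively into its range. -/

/-- Block diagonal matrix `C̄ = diag[C_1, …, C_N]`. -/
def Cbar {N n : ℕ} (m : Fin N → ℕ) (C : ∀ i, Matrix (Fin (m i)) (Fin n) ℝ) :
    Matrix ((i : Fin N) × Fin (m i)) (Fin N × Fin n) ℝ :=
  Matrix.of fun p q => if p.1 = q.1 then C p.1 p.2 q.2 else 0

/-- The observability matrix `O_H = [H' (HA)' … (HA^{n-1})']'`. -/
def obsMat {n mH : ℕ} (A : Matrix (Fin n) (Fin n) ℝ) (H : Matrix (Fin mH) (Fin n) ℝ) :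
    Matrix (Fin n × Fin mH) (Fin n) ℝ :=
  Matrix.of fun p c => (H * A ^ (p.1 : ℕ)) p.2 c

/-- The undetectable subspace of `(C_i, A)`:
`⋂_{l=1}^n Ker(C_i A^{l-1}) ∩ Ker α⁺_A(A)`. -/
noncomputable def undetSub {n mi : ℕ} (A : Matrix (Fin n) (Fin n) ℝ)
    (Ci : Matrix (Fin mi) (Fin n) ℝ) (aplus : Polynomial ℝ) :
    Submodule ℝ (Fin n → ℝ) :=
  (⨅ l : Fin n, LinearMap.ker ((Ci * A ^ (l : ℕ)).mulVecLin)) ⊓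
    LinearMap.ker (aeval A aplus).mulVecLin

namespace Matrix

variable {R ι κ μ ν : Type*}

section CommSemiring

variable [CommSemiring R] [Fintype ι] [DecidableEq ι] [Fintype κ] [DecidableEq κ]

theorem one_kronecker_pow (A : Matrix ι ι R) (l : ℕ) :
    ((1 : Matrix κ κ R) ⊗ₖ A) ^ l = 1 ⊗ₖ (A ^ l) := by
  induction l with
  | zero => simp
  | succ l ih => rw [pow_succ, ih, pow_succ, ← mul_kronecker_mul, Matrix.one_mul]

theorem aeval_one_kronecker (A : Matrix ι ι R) (p : R[X]) :
    aeval ((1 : Matrix κ κ R) ⊗ₖ A) p = 1 ⊗ₖ aeval A p := by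
  induction p using Polynomial.induction_on' with
  | add p q hp hq => rw [map_add, hp, hq, map_add, kronecker_add]
  | monomial k a =>
    simp only [aeval_monomial, one_kronecker_pow, Algebra.algebraMap_eq_smul_one,
      smul_mul_assoc, Matrix.one_mul, kronecker_smul]

end CommSemiring

theorem kronecker_mulVec_vec_vecMulVec [CommSemiring R] [Fintype ι] [Fintype κ]
    (B : Matrix μ κ R) (D : Matrix ν ι R) (x : ι → R) (u : κ → R) :
    (B ⊗ₖ D) *ᵥ vec (vecMulVec x u) = vec (vecMulVec (D *ᵥ x) (B *ᵥ u)) := by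
  rw [kronecker_mulVec_vec, mul_vecMulVec, vecMulVec_mul, vecMul_transpose]

theorem vec_vecMulVec_single_eq_zero_iff [MulZeroOneClass R] [DecidableEq κ] {x : ι → R}
    {i : κ} :
    vec (vecMulVec x (Pi.single i 1)) = 0 ↔ x = 0 := by
  refine ⟨fun h => funext fun c => ?_, fun h => by simp [h]⟩
  simpa [vecMulVec_apply] using congrFun h (i, c)

theorem mul_pow_mulVec_eq_zero_of_forall_lt_card [CommRing R] [Nontrivial R] [Fintype ι]
    [DecidableEq ι] (A : Matrix ι ι R) (M : Matrix κ ι R) {x : ι → R}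
    (h : ∀ l < Fintype.card ι, (M * A ^ l) *ᵥ x = 0) (k : ℕ) :
    (M * A ^ k) *ᵥ x = 0 := by
  let φ : R[X] →ₗ[R] κ → R :=
    M.mulVecLin ∘ₗ LinearMap.applyₗ x ∘ₗ Matrix.toLin'.toLinearMap ∘ₗ (aeval A).toLinearMap
  have hφ : ∀ p, φ p = (M * aeval A p) *ᵥ x := fun p => by simp [φ, Matrix.mulVec_mulVec]
  have hlt : degreeLT R (Fintype.card ι) ≤ LinearMap.ker φ := by
    classical
    rw [degreeLT_eq_span_X_pow, Submodule.span_le, Finset.coe_image, Set.image_subset_iff]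
    intro l hl
    simpa [hφ] using h l (Finset.mem_range.1 hl)
  have hmod : X ^ k %ₘ A.charpoly ∈ degreeLT R (Fintype.card ι) := by
    rw [mem_degreeLT, ← A.charpoly_degree_eq_dim]
    exact degree_modByMonic_lt _ A.charpoly_monic
  rw [A.pow_eq_aeval_mod_charpoly, ← hφ]
  exact hlt hmod

theorem finrank_le_rank_of_disjoint_ker {K : Type*} [Field K] [Fintype ι] (M : Matrix κ ι K)
    {U : Submodule K (ι → K)} (hU : Disjoint U (LinearMap.ker M.mulVecLin)) :
    Module.finrank K U ≤ M.rank :=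
  calc Module.finrank K U = Module.finrank K (LinearMap.range (M.mulVecLin.domRestrict U)) :=
        (LinearMap.finrank_range_of_inj (LinearMap.injective_domRestrict_iff.2 hU)).symm
    _ ≤ M.rank := Submodule.finrank_mono (LinearMap.range_domRestrict_le_range _ _)

end Matrix

theorem Cbar_mulVec_vec_vecMulVec {N n : ℕ} (m : Fin N → ℕ)
    (C : ∀ i, Matrix (Fin (m i)) (Fin n) ℝ) (y : Fin n → ℝ) (u : Fin N → ℝ) :
    Cbar m C *ᵥ vec (vecMulVec y u) = fun p => (C p.1 *ᵥ y) p.2 * u p.1 := by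
  ext p
  simp [Cbar, mulVec, dotProduct, Fintype.sum_prod_type, vecMulVec_apply, Finset.sum_mul, mul_assoc]

theorem obsMat_mulVec_eq_zero_iff {n mH : ℕ} (A : Matrix (Fin n) (Fin n) ℝ)
    (H : Matrix (Fin mH) (Fin n) ℝ) {x : Fin n → ℝ} :
    obsMat A H *ᵥ x = 0 ↔ ∀ l : Fin n, (H * A ^ (l : ℕ)) *ᵥ x = 0 := by
  simp only [funext_iff, Prod.forall]
  rfl

theorem mem_undetSub_iff {n mi : ℕ} {A : Matrix (Fin n) (Fin n) ℝ}
    {Ci : Matrix (Fin mi) (Fin n) ℝ} {aplus : Polynomial ℝ} {x : Fin n → ℝ} :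
    x ∈ undetSub A Ci aplus ↔
      (∀ l : Fin n, (Ci * A ^ (l : ℕ)) *ᵥ x = 0) ∧ aeval A aplus *ᵥ x = 0 := by
  simp [undetSub]

theorem rank_obsMat_ge_dim_undet_general {n N mH : ℕ}
    (A : Matrix (Fin n) (Fin n) ℝ)
    (m : Fin N → ℕ) (C : ∀ i, Matrix (Fin (m i)) (Fin n) ℝ)
    (H : Matrix (Fin mH) (Fin n) ℝ) (L : Matrix (Fin N) (Fin N) ℝ)
    (aplus : Polynomial ℝ)
    (hdet : ∀ x : Fin N × Fin n → ℝ,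
      (∀ l < n * N,
          (Cbar m C * ((1 : Matrix (Fin N) (Fin N) ℝ) ⊗ₖ A) ^ l).mulVec x = 0 ∧
          ((L ⊗ₖ H) * ((1 : Matrix (Fin N) (Fin N) ℝ) ⊗ₖ A) ^ l).mulVec x = 0) →
      (aeval ((1 : Matrix (Fin N) (Fin N) ℝ) ⊗ₖ A) aplus).mulVec x = 0 →
      x = 0) :
    ∀ i : Fin N, Module.finrank ℝ (undetSub A (C i) aplus) ≤ (obsMat A H).rank := by
  intro i
  refine (obsMat A H).finrank_le_rank_of_disjoint_ker (Submodule.disjoint_def.2 fun x hxU hxK => ?_)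
  obtain ⟨hC, hα⟩ := mem_undetSub_iff.1 hxU
  have hH := (obsMat_mulVec_eq_zero_iff A H).1 hxK
  have hCA := mul_pow_mulVec_eq_zero_of_forall_lt_card A (C i)
    fun l hl => hC ⟨l, by simpa using hl⟩
  have hHA := mul_pow_mulVec_eq_zero_of_forall_lt_card A H fun l hl => hH ⟨l, by simpa using hl⟩
  -- `vec (vecMulVec x (Pi.single i 1))` is `e_i ⊗ x`: the vector with block `i` equal to `x`
  refine vec_vecMulVec_single_eq_zero_iff (i := i) |>.1 (hdet _ (fun l _ => ⟨?_, ?_⟩) ?_)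
  · rw [one_kronecker_pow, ← mulVec_mulVec, kronecker_mulVec_vec_vecMulVec,
      Cbar_mulVec_vec_vecMulVec, one_mulVec]
    funext p
    obtain rfl | hp := eq_or_ne p.1 i
    · simp [mulVec_mulVec, hCA]
    · simp [Pi.single_eq_of_ne hp]
  · rw [one_kronecker_pow, ← mul_kronecker_mul, Matrix.mul_one, kronecker_mulVec_vec_vecMulVec,
      hHA, zero_vecMulVec, vec_zero]
  · rw [aeval_one_kronecker, kronecker_mulVec_vec_vecMulVec, hα, zero_vecMulVec, vec_zero]

/-- Theorem 1(iii): if the pair `([C̄', (L⊗H)']', I_N ⊗ A)` is detectable and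
`1_N ∈ Ker L`, then `rank O_H ≥ max_i dim C_iᵘ`. -/
theorem rank_obsMat_ge_dim_undet {n N mH : ℕ} (hN : 0 < N)
    (A : Matrix (Fin n) (Fin n) ℝ)
    (m : Fin N → ℕ) (C : ∀ i, Matrix (Fin (m i)) (Fin n) ℝ)
    (H : Matrix (Fin mH) (Fin n) ℝ) (L : Matrix (Fin N) (Fin N) ℝ)
    (aminus aplus : Polynomial ℝ)
    (hmonicm : aminus.Monic) (hmonicp : aplus.Monic)
    (hfact : minpoly ℝ A = aminus * aplus)
    (hminus : ∀ μ ∈ (aminus.map (algebraMap ℝ ℂ)).roots, μ.re < 0)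
    (hplus : ∀ μ ∈ (aplus.map (algebraMap ℝ ℂ)).roots, 0 ≤ μ.re)
    (hone : L.mulVec (fun _ => 1) = 0)
    (hdet : ∀ x : Fin N × Fin n → ℝ,
      (∀ l < n * N,
          (Cbar m C * ((1 : Matrix (Fin N) (Fin N) ℝ) ⊗ₖ A) ^ l).mulVec x = 0 ∧
          ((L ⊗ₖ H) * ((1 : Matrix (Fin N) (Fin N) ℝ) ⊗ₖ A) ^ l).mulVec x = 0) →
      (aeval ((1 : Matrix (Fin N) (Fin N) ℝ) ⊗ₖ A) aplus).mulVec x = 0 →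
      x = 0) :
    ∀ i : Fin N, Module.finrank ℝ (undetSub A (C i) aplus) ≤ (obsMat A H).rank :=
  rank_obsMat_ge_dim_undet_general A m C H L aplus hdet
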